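/- Let G be a context-free grammar and, for each nonterminal X, let aut(X) be a finite automaton over the alphabet of def(X) (terminals of Σ plus pseudoterminals) with L(def(X)) ⊆ L(aut(X)). Then the combined automaton for G, obtained from aut(S) by recursively replacing every transition labeled by a pseudoterminal X' from a state s to a state s' with ε-transitions from s to the initial state of a fresh copy of aut(X') and ε-transitions from the final states of that copy to s', accepts a superset of L(G); moreover this replacement process terminates, since the dependency graph of the subautomata is acyclic. -/

import Mathlib

/-!
Infrastructure for the strongly-connected-component decomposition of a
context-free grammar (Pereira & Wright): the graph `conn(G)`, the components
`comp(X)`, the defining subgrammars `def(X)` (with out-of-component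
nonterminals treated as pseudoterminals), and language substitution.
-/

namespace LRApprox

open scoped Classical

universe uN uT

/-- Context-free grammar with nonterminals in an arbitrary universe, as in the older Mathlib. -/
structure ContextFreeGrammar.{u, v} (T : Type v) where
  /-- Type of nonterminals. -/
  NT : Type u
  /-- Initial nonterminal. -/
  initial : NT
  /-- Rewrite rules. -/
  rules : Finset (ContextFreeRule T NT)

namespace ContextFreeGrammar

/-- One rewriting step by a rule of `g`. -/
def Produces {T : Type uT} (g : ContextFreeGrammar.{uN} T) (u v : List (Symbol T g.NT)) : Prop :=
  ∃ r ∈ g.rules, r.Rewrites u v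

/-- Rewriting in some number of steps. -/
abbrev Derives {T : Type uT} (g : ContextFreeGrammar.{uN} T) :
    List (Symbol T g.NT) → List (Symbol T g.NT) → Prop :=
  Relation.ReflTransGen g.Produces

/-- `g` derives `s` from its initial nonterminal. -/
def Generates {T : Type uT} (g : ContextFreeGrammar.{uN} T) (s : List (Symbol T g.NT)) : Prop :=
  g.Derives [Symbol.nonterminal g.initial] s

/-- The language generated by `g`. -/
def language {T : Type uT} (g : ContextFreeGrammar.{uN} T) : Language T :=
  { w : List T | g.Generates (List.map Symbol.terminal w) }

end ContextFreeGrammar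

variable {T : Type uT}

/-- A CFG is left-linear if every rule has the form `A → Bβ` or `A → β`
with `β` a string of terminals. -/
def LeftLinear (g : ContextFreeGrammar.{uN} T) : Prop :=
  ∀ r ∈ g.rules, (∃ β : List T, r.output = β.map Symbol.terminal) ∨
    (∃ (B : g.NT) (β : List T), r.output = Symbol.nonterminal B :: β.map Symbol.terminal)

/-- A CFG is right-linear if every rule has the form `A → βB` or `A → β`
with `β` a string of terminals. -/
def RightLinear (g : ContextFreeGrammar.{uN} T) : Prop :=
  ∀ r ∈ g.rules, (∃ β : List T, r.output = β.map Symbol.terminal) ∨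
    (∃ (B : g.NT) (β : List T), r.output = β.map Symbol.terminal ++ [Symbol.nonterminal B])

/-- The edge relation of the graph `conn(G)`: an arc from `X` to `Y` whenever
`Y` occurs in the right-hand side of a rule of `G` whose left-hand side is `X`. -/
def ConnStep (g : ContextFreeGrammar.{uN} T) (X Y : g.NT) : Prop :=
  ∃ r ∈ g.rules, r.input = X ∧ Symbol.nonterminal Y ∈ r.output

/-- `X` and `Y` lie in the same strongly connected component of `conn(G)`. -/
def SameComp (g : ContextFreeGrammar.{uN} T) (X Y : g.NT) : Prop :=
  Relation.ReflTransGen (ConnStep g) X Y ∧ Relation.ReflTransGen (ConnStep g) Y X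

/-- Conversion of a symbol of `G` into a symbol of the defining subgrammar
`def(X)`: nonterminals outside `comp(X)` become pseudoterminals. -/
noncomputable def convSym (g : ContextFreeGrammar.{uN} T) (X : g.NT) :
    Symbol T g.NT → Symbol (T ⊕ g.NT) {Y : g.NT // SameComp g X Y}
  | .terminal t => .terminal (Sum.inl t)
  | .nonterminal Y =>
      if h : SameComp g X Y then .nonterminal ⟨Y, h⟩ else .terminal (Sum.inr Y)

/-- The defining subgrammar `def(X)`: start symbol `X`, nonterminals
`comp(X)`, terminals `Σ` plus the pseudoterminals, and the rules of `G` whose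
left-hand side lies in `comp(X)`. -/
noncomputable def defSub (g : ContextFreeGrammar.{uN} T) (X : g.NT) :
    ContextFreeGrammar.{uN} (T ⊕ g.NT) where
  NT := {Y : g.NT // SameComp g X Y}
  initial := ⟨X, Relation.ReflTransGen.refl, Relation.ReflTransGen.refl⟩
  rules :=
    (g.rules.toList.filterMap fun r =>
      if h : SameComp g X r.input then
        some ⟨⟨r.input, h⟩, r.output.map (convSym g X)⟩
      else none).toFinset

/-- `Y` is a pseudoterminal of `def(X)`: it is not in `comp(X)` but occurs in
the right-hand side of a rule whose left-hand side is in `comp(X)`. -/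
def IsPseudo (g : ContextFreeGrammar.{uN} T) (X Y : g.NT) : Prop :=
  ¬ SameComp g X Y ∧
    ∃ r ∈ g.rules, SameComp g X r.input ∧ Symbol.nonterminal Y ∈ r.output

/-- `L_G(X)`: the terminal strings derivable from the nonterminal `X` in `G`. -/
def langFrom (g : ContextFreeGrammar.{uN} T) (X : g.NT) : Language T :=
  {w : List T | g.Derives [Symbol.nonterminal X] (w.map Symbol.terminal)}

/-- Extension of a substitution `f` from symbols to strings:
`f(c₁…c_n) = f(c₁)⋯f(c_n)`, with `f(ε) = {ε}`. -/
def substStr {α : Type*} {β : Type*} (f : α → Language β) : List α → Language β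
  | [] => 1
  | c :: u => f c * substStr f u

/-- Extension of a substitution to a language: `f(L) = ⋃_{u ∈ L} f(u)`. -/
def substLang {α : Type*} {β : Type*} (f : α → Language β) (L : Language α) :
    Language β :=
  ⋃ u ∈ L, substStr f u

end LRApprox

open LRApprox

/-!
A pseudoterminal `Y` of `def(X)` is reachable from `X` in `conn(G)` but cannot reach back, so
fewer nonterminals are reachable from `Y` than from `X`: "is a pseudoterminal of" is
well-founded, and the languages `Exp X` are defined by well-founded recursion.

Cutting a derivation `X ⇒* w` of `G` at every rewriting of a nonterminal outside `comp(X)`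
leaves a derivation in `def(X)` of a word `u` over `Σ` and the pseudoterminals, with `w` in
the language obtained from `u` by substituting `L_G(Y)` for each pseudoterminal `Y`; by
induction `L_G(Y) ⊆ Exp Y`, hence `L_G(X) ⊆ Exp X`.

The combined automaton, in which a transition on `Y` detours through a copy of a DFA for
`Exp Y`, reads exactly the substituted words, so each `Exp X` is regular.
-/

namespace LRApprox

section Substitution

variable {α β γ : Type*}

lemma substStr_cons (f : α → Language β) (c : α) (u : List α) :
    substStr f (c :: u) = f c * substStr f u := rfl

lemma substStr_eq_prod (f : α → Language β) (u : List α) : substStr f u = (u.map f).prod := by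
  induction u with
  | nil => rfl
  | cons c u ih => rw [substStr_cons, ih, List.map_cons, List.prod_cons]

lemma substStr_append (f : α → Language β) (u v : List α) :
    substStr f (u ++ v) = substStr f u * substStr f v := by
  simp only [substStr_eq_prod, List.map_append, List.prod_append]

lemma substStr_map (f : α → Language β) (h : γ → α) (u : List γ) :
    substStr f (u.map h) = substStr (f ∘ h) u := by
  simp only [substStr_eq_prod, List.map_map]

lemma substStr_mono {f f' : α → Language β} {u : List α} (h : ∀ c ∈ u, f c ≤ f' c) :
    substStr f u ≤ substStr f' u := by
  simp only [substStr_eq_prod]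
  exact List.Forall₂.prod_le_prod' <|
    List.forall₂_map_left_iff.2 <| List.forall₂_map_right_iff.2 <| List.forall₂_same.2 h

lemma substStr_congr {f f' : α → Language β} {u : List α} (h : ∀ c ∈ u, f c = f' c) :
    substStr f u = substStr f' u :=
  le_antisymm (substStr_mono fun c hc => (h c hc).le) (substStr_mono fun c hc => (h c hc).ge)

lemma substLang_congr {f f' : α → Language β} {L : Language α}
    (h : ∀ u ∈ L, ∀ c ∈ u, f c = f' c) : substLang f L = substLang f' L :=
  Set.iUnion₂_congr fun u hu => substStr_congr (h u hu)

lemma mem_substStr_singleton_self (w : List α) :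
    w ∈ substStr (fun a => ({[a]} : Language α)) w := by
  induction w with
  | nil => exact (Language.mem_one _).2 rfl
  | cons a w ih => exact Language.mem_mul.2 ⟨[a], rfl, w, ih, rfl⟩

end Substitution

section Regular

variable {T B Q : Type*}

lemma _root_.εNFA.isRegular_accepts {σ : Type*} [Finite σ] (M : εNFA T σ) :
    M.accepts.IsRegular := by
  classical
  have := Fintype.ofFinite σ
  exact Language.isRegular_iff.2
    ⟨_, inferInstance, M.toNFA.toDFA, by rw [NFA.toDFA_correct, εNFA.toNFA_correct]⟩

section Construction

variable {B₀ : Set B} {σ : B₀ → Type*} (N : NFA (T ⊕ B) Q) (D : ∀ b : B₀, DFA T (σ b))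

open Classical in
/-- Letters outside `B₀` stand for the empty language: `substεNFA` has no transitions on them. -/
def letterLang : T ⊕ B → Language T :=
  Sum.elim (fun a => {[a]}) fun b => if h : b ∈ B₀ then (D ⟨b, h⟩).accepts else 0

/-- A state `inr (q', ⟨b, s⟩)` is the state `s` of the copy of `D b` that returns to `q'`. -/
def substεNFA : εNFA T (Q ⊕ Q × Σ b : B₀, σ b) where
  step
    | .inl q, some a => Sum.inl '' N.step q (.inl a)
    | .inl q, none =>
        {x | ∃ q', ∃ b : B₀, q' ∈ N.step q (.inr b) ∧ x = .inr (q', ⟨b, (D b).start⟩)}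
    | .inr (q', ⟨b, s⟩), some a => {.inr (q', ⟨b, (D b).step s a⟩)}
    | .inr (q', ⟨b, s⟩), none => {x | s ∈ (D b).accept ∧ x = .inl q'}
  start := Sum.inl '' N.start
  accept := Sum.inl '' N.accept

def exitLang (t : Q) : Q ⊕ Q × (Σ b : B₀, σ b) → Language T
  | .inl q => substLang (letterLang D) {u | Nonempty (N.Path q t u)}
  | .inr (q', ⟨b, s⟩) =>
      (D b).acceptsFrom s * substLang (letterLang D) {u | Nonempty (N.Path q' t u)}

variable {N D}

lemma isPath_substεNFA_inr {q' : Q} {b : B₀} {s : σ b} {v : List T}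
    {y : Q ⊕ Q × Σ b : B₀, σ b} {xs : List (Option T)}
    (hv : v ∈ (D b).acceptsFrom s) (h : (substεNFA N D).IsPath (.inl q') y xs) :
    (substεNFA N D).IsPath (.inr (q', ⟨b, s⟩)) y (v.map some ++ none :: xs) := by
  induction v generalizing s with
  | nil => exact .cons _ _ _ none _ ⟨hv, rfl⟩ h
  | cons c v ih => exact .cons _ _ _ (some c) _ rfl (ih hv)

lemma exists_isPath_substεNFA {q t : Q} {u : List (T ⊕ B)} (p : N.Path q t u) {w : List T}
    (hw : w ∈ substStr (letterLang D) u) :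
    ∃ xs : List (Option T),
      xs.reduceOption = w ∧ (substεNFA N D).IsPath (.inl q) (.inl t) xs := by
  induction p generalizing w with
  | nil => exact ⟨[], ((Language.mem_one _).1 hw).symm, .nil _⟩
  | cons q'' q t c u hstep _ ih =>
      obtain ⟨w₁, hw₁, w₂, hw₂, rfl⟩ := Language.mem_mul.1 hw
      obtain ⟨xs, rfl, hxs⟩ := ih hw₂
      cases c with
      | inl a =>
          obtain rfl : w₁ = [a] := hw₁
          exact ⟨some a :: xs, rfl, .cons _ _ _ _ _ ⟨q'', hstep, rfl⟩ hxs⟩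
      | inr b =>
          by_cases hb : b ∈ B₀
          · simp only [letterLang, Sum.elim_inr, dif_pos hb] at hw₁
            refine ⟨none :: (w₁.map some ++ none :: xs), by simp [List.reduceOption],
              .cons _ _ _ _ _ ⟨q'', ⟨b, hb⟩, hstep, rfl⟩
                (isPath_substεNFA_inr hw₁ hxs)⟩
          · simp [letterLang, dif_neg hb] at hw₁

lemma reduceOption_mem_exitLang {x y : Q ⊕ Q × Σ b : B₀, σ b} {xs : List (Option T)}
    (h : (substεNFA N D).IsPath x y xs) {t : Q} (hy : y = .inl t) :
    xs.reduceOption ∈ exitLang N D t x := by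
  induction h with
  | nil =>
      subst hy
      exact Set.mem_biUnion (x := []) ⟨.nil t⟩ ((Language.mem_one _).2 rfl)
  | cons x' x y a xs hstep _ ih =>
      have ih := ih hy
      rcases x with q | ⟨q', b, s⟩ <;> rcases a with _ | c
      · obtain ⟨q', b, hq', rfl⟩ := hstep
        obtain ⟨v, hv, w, hw, hvw⟩ := Language.mem_mul.1 ih
        obtain ⟨u, ⟨p⟩, hwu⟩ := Set.mem_iUnion₂.1 hw
        refine Set.mem_iUnion₂.2 ⟨.inr b :: u, ⟨.cons _ _ _ _ _ hq' p⟩, ?_⟩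
        rw [List.reduceOption_cons_of_none, ← hvw]
        have hb : v ∈ letterLang D (.inr b) := by
          simp only [letterLang, Sum.elim_inr, dif_pos b.2]
          exact hv
        exact Language.mem_mul.2 ⟨v, hb, w, hwu, rfl⟩
      · obtain ⟨q'', hq'', rfl⟩ := hstep
        obtain ⟨u, ⟨p⟩, hwu⟩ := Set.mem_iUnion₂.1 ih
        refine Set.mem_iUnion₂.2 ⟨.inl c :: u, ⟨.cons _ _ _ _ _ hq'' p⟩, ?_⟩
        rw [List.reduceOption_cons_of_some]
        exact Language.mem_mul.2 ⟨[c], rfl, _, hwu, rfl⟩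
      · obtain ⟨hs, rfl⟩ := hstep
        rw [List.reduceOption_cons_of_none]
        exact Language.mem_mul.2 ⟨[], hs, _, ih, rfl⟩
      · obtain rfl := hstep
        obtain ⟨v, hv, w, hw, hvw⟩ := Language.mem_mul.1 ih
        rw [List.reduceOption_cons_of_some, ← hvw]
        exact Language.mem_mul.2 ⟨c :: v, hv, w, hw, rfl⟩

lemma accepts_substεNFA : (substεNFA N D).accepts = substLang (letterLang D) N.accepts := by
  ext w
  rw [εNFA.mem_accepts_iff_exists_path]
  constructor
  · rintro ⟨_, _, xs, ⟨q, hq, rfl⟩, ⟨t, ht, rfl⟩, rfl, h⟩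
    obtain ⟨u, ⟨p⟩, hu⟩ := Set.mem_iUnion₂.1 (reduceOption_mem_exitLang h rfl)
    exact Set.mem_biUnion (NFA.accepts_iff_exists_path.2 ⟨q, hq, t, ht, ⟨p⟩⟩) hu
  · intro hw
    obtain ⟨u, hu, hwu⟩ := Set.mem_iUnion₂.1 hw
    obtain ⟨q, hq, t, ht, ⟨p⟩⟩ := NFA.accepts_iff_exists_path.1 hu
    obtain ⟨xs, hxs, h⟩ := exists_isPath_substεNFA p hwu
    exact ⟨_, _, xs, ⟨q, hq, rfl⟩, ⟨t, ht, rfl⟩, hxs, h⟩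

end Construction

theorem isRegular_substLang [Finite Q] (N : NFA (T ⊕ B) Q) {B₀ : Set B} (hB₀ : B₀.Finite)
    (hN : ∀ u ∈ N.accepts, ∀ b, Sum.inr b ∈ u → b ∈ B₀) {L : B → Language T}
    (hL : ∀ b ∈ B₀, (L b).IsRegular) :
    (substLang (Sum.elim (fun a => {[a]}) L) N.accepts).IsRegular := by
  choose σ _ D hD using fun b : B₀ => hL b b.2
  have : Finite B₀ := hB₀.to_subtype
  rw [substLang_congr (f' := letterLang D), ← accepts_substεNFA]
  · exact (substεNFA N D).isRegular_accepts
  · rintro u hu (a | b) hb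
    · rfl
    · simp [letterLang, hN u hu b hb, hD]

end Regular

theorem exists_eq_substLang_of_wellFounded {T B : Type*} {r : B → B → Prop} (hr : WellFounded r)
    (K : B → Language (T ⊕ B)) (hK : ∀ X, ∀ u ∈ K X, ∀ Y, Sum.inr Y ∈ u → r Y X) :
    ∃ E : B → Language T, ∀ X, E X = substLang (Sum.elim (fun a => {[a]}) E) (K X) := by
  classical
  refine ⟨hr.fix fun X E => substLang (Sum.elim (fun a => {[a]})
    fun Y => if h : r Y X then E Y h else 0) (K X), fun X => ?_⟩
  rw [hr.fix_eq]
  refine substLang_congr fun u hu c hc => ?_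
  rcases c with a | Y
  · rfl
  · exact dif_pos (hK X u hu Y hc)

lemma _root_.ContextFreeRule.Rewrites.append_split {T N : Type*} {r : ContextFreeRule T N}
    {α β γ : List (Symbol T N)} (h : r.Rewrites (α ++ β) γ) :
    (∃ α', r.Rewrites α α' ∧ γ = α' ++ β) ∨
      (∃ β', r.Rewrites β β' ∧ γ = α ++ β') := by
  induction α generalizing γ with
  | nil => exact .inr ⟨γ, h, rfl⟩
  | cons x α ih =>
      cases h with
      | head => exact .inl ⟨_, .head α, by simp⟩
      | cons _ h =>
          rcases ih h with ⟨α', h', rfl⟩ | ⟨β', h', rfl⟩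
          exacts [.inl ⟨x :: α', h'.cons x, rfl⟩, .inr ⟨β', h', rfl⟩]

namespace ContextFreeGrammar

variable {T : Type*} {g : ContextFreeGrammar T}

lemma Produces.append_left {v w : List (Symbol T g.NT)} (hvw : g.Produces v w)
    (p : List (Symbol T g.NT)) : g.Produces (p ++ v) (p ++ w) :=
  let ⟨r, hr, hrvw⟩ := hvw; ⟨r, hr, hrvw.append_left p⟩

lemma Produces.append_right {v w : List (Symbol T g.NT)} (hvw : g.Produces v w)
    (p : List (Symbol T g.NT)) : g.Produces (v ++ p) (w ++ p) :=
  let ⟨r, hr, hrvw⟩ := hvw; ⟨r, hr, hrvw.append_right p⟩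

lemma Derives.append {α α' β β' : List (Symbol T g.NT)} (hα : g.Derives α α')
    (hβ : g.Derives β β') : g.Derives (α ++ β) (α' ++ β') := by
  refine Relation.ReflTransGen.trans (b := α' ++ β) ?_ ?_
  · induction hα with
    | refl => rfl
    | tail _ h ih => exact ih.tail (h.append_right β)
  · induction hβ with
    | refl => rfl
    | tail _ h ih => exact ih.tail (h.append_left α')

lemma Derives.append_split {α β γ : List (Symbol T g.NT)} (h : g.Derives (α ++ β) γ) :
    ∃ α' β', γ = α' ++ β' ∧ g.Derives α α' ∧ g.Derives β β' := by
  induction h with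
  | refl => exact ⟨α, β, rfl, .refl, .refl⟩
  | tail _ hstep ih =>
      obtain ⟨α', β', rfl, hα, hβ⟩ := ih
      obtain ⟨r, hr, hrw⟩ := hstep
      rcases hrw.append_split with ⟨α'', h', rfl⟩ | ⟨β'', h', rfl⟩
      exacts [⟨α'', β', rfl, hα.tail ⟨r, hr, h'⟩, hβ⟩,
        ⟨α', β'', rfl, hα, hβ.tail ⟨r, hr, h'⟩⟩]

lemma Derives.append_split_terminal {α β : List (Symbol T g.NT)} {w : List T}
    (h : g.Derives (α ++ β) (w.map .terminal)) :
    ∃ w₁ w₂, w = w₁ ++ w₂ ∧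
      g.Derives α (w₁.map .terminal) ∧ g.Derives β (w₂.map .terminal) := by
  obtain ⟨α', β', hw, hα, hβ⟩ := h.append_split
  obtain ⟨w₁, w₂, rfl, rfl, rfl⟩ := List.map_eq_append_iff.1 hw
  exact ⟨w₁, w₂, rfl, hα, hβ⟩

end ContextFreeGrammar

section Dependency

variable {T : Type*} (g : ContextFreeGrammar T)

def rhsNonterminals : Set g.NT :=
  {Y | ∃ r ∈ g.rules, Symbol.nonterminal Y ∈ r.output}

lemma finite_rhsNonterminals : (rhsNonterminals g).Finite :=
  (g.rules.finite_toSet.biUnion fun r _ =>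
      r.output.finite_toSet.preimage fun _ _ _ _ => Symbol.nonterminal.inj).subset
    fun _ ⟨_, hr, hY⟩ => Set.mem_biUnion hr hY

def reachable (X : g.NT) : Set g.NT :=
  {Z | Relation.ReflTransGen (ConnStep g) X Z}

lemma finite_reachable (X : g.NT) : (reachable g X).Finite :=
  ((finite_rhsNonterminals g).insert X).subset fun Z hZ => by
    rcases Relation.ReflTransGen.cases_tail hZ with rfl | ⟨_, _, r, hr, -, hZ⟩
    exacts [Set.mem_insert _ _, Set.mem_insert_of_mem _ ⟨r, hr, hZ⟩]

variable {g} in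
lemma reachable_ssubset_of_isPseudo {X Y : g.NT} (h : IsPseudo g X Y) :
    reachable g Y ⊂ reachable g X := by
  obtain ⟨hXY, r, hr, hXr, hY⟩ := h
  have hreach : Relation.ReflTransGen (ConnStep g) X Y := hXr.1.tail ⟨r, hr, rfl, hY⟩
  exact (Set.ssubset_iff_of_subset fun Z hZ => hreach.trans hZ).2
    ⟨X, .refl, fun hYX => hXY ⟨hreach, hYX⟩⟩

lemma isPseudo_wellFounded : WellFounded fun Y X : g.NT => IsPseudo g X Y :=
  Subrelation.wf
    (fun h => Set.ncard_lt_ncard (reachable_ssubset_of_isPseudo h) (finite_reachable g _))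
    (measure fun X => (reachable g X).ncard).wf

lemma finite_setOf_isPseudo (X : g.NT) : {Y | IsPseudo g X Y}.Finite :=
  (finite_rhsNonterminals g).subset fun _ ⟨_, r, hr, _, hY⟩ => ⟨r, hr, hY⟩

end Dependency

variable {T : Type*} {g : ContextFreeGrammar T}

variable (g) in
def symbolLang : Symbol T g.NT → Language T
  | .terminal t => {[t]}
  | .nonterminal Y => langFrom g Y

variable (g) in
def pseudoLang : T ⊕ g.NT → Language T :=
  Sum.elim (fun t => {[t]}) (langFrom g)

lemma derives_of_mem_substStr {α : List (Symbol T g.NT)} {w : List T}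
    (hw : w ∈ substStr (symbolLang g) α) : g.Derives α (w.map .terminal) := by
  induction α generalizing w with
  | nil => rw [(Language.mem_one w).1 hw]; exact .refl
  | cons c α ih =>
      obtain ⟨w₁, hw₁, w₂, hw₂, rfl⟩ := Language.mem_mul.1 hw
      have hc : g.Derives [c] (w₁.map .terminal) := by
        cases c with
        | terminal t => rw [show w₁ = [t] from hw₁]; rfl
        | nonterminal Y => exact hw₁
      rw [List.map_append]
      exact hc.append (ih hw₂)

section DefiningSubgrammar

variable {X : g.NT}

variable (g X) in
/-- `convSym g X` with its codomain stated through `(defSub g X).NT` rather than the subtype it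
unfolds to: `rw` and `simp` inside `def(X)`-derivations need the two to agree reducibly. -/
noncomputable def toDefSub : Symbol T g.NT → Symbol (T ⊕ g.NT) (defSub g X).NT :=
  convSym g X

open scoped Classical in
lemma exists_of_mem_defSub_rules
    {r' : ContextFreeRule (T ⊕ g.NT) {Y : g.NT // SameComp g X Y}}
    (h : r' ∈ (defSub g X).rules) :
    ∃ r ∈ g.rules, r'.input.1 = r.input ∧ r'.output = r.output.map (toDefSub g X) := by
  obtain ⟨r, hr, hsome⟩ := List.mem_filterMap.1 (List.mem_toFinset.1 h)
  split_ifs at hsome with hX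
  cases hsome
  exact ⟨r, Finset.mem_toList.1 hr, rfl, rfl⟩

open scoped Classical in
lemma mem_defSub_rules {r : ContextFreeRule T g.NT} (hr : r ∈ g.rules)
    (hX : SameComp g X r.input) :
    (⟨⟨r.input, hX⟩, r.output.map (toDefSub g X)⟩ :
      ContextFreeRule (T ⊕ g.NT) {Y : g.NT // SameComp g X Y}) ∈ (defSub g X).rules :=
  List.mem_toFinset.2 (List.mem_filterMap.2 ⟨r, Finset.mem_toList.2 hr, dif_pos hX⟩)

variable (g X) in
def backSym : Symbol (T ⊕ g.NT) (defSub g X).NT → Symbol T g.NT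
  | .terminal (.inl t) => .terminal t
  | .terminal (.inr Y) => .nonterminal Y
  | .nonterminal Y => .nonterminal Y.1

lemma backSym_nonterminal (Y : (defSub g X).NT) :
    backSym g X (.nonterminal Y) = .nonterminal Y.1 :=
  rfl

lemma backSym_toDefSub (c : Symbol T g.NT) : backSym g X (toDefSub g X c) = c := by
  rcases c with t | Y
  · rfl
  · simp only [toDefSub, convSym]
    split_ifs <;> rfl

lemma map_backSym_map_toDefSub (α : List (Symbol T g.NT)) :
    (α.map (toDefSub g X)).map (backSym g X) = α := by
  simp [Function.comp_def, backSym_toDefSub]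

lemma ContextFreeGrammar.Produces.map_backSym
    {γ γ' : List (Symbol (T ⊕ g.NT) (defSub g X).NT)}
    (h : (defSub g X).Produces γ γ') :
    g.Produces (γ.map (backSym g X)) (γ'.map (backSym g X)) := by
  obtain ⟨r', hr', hrw⟩ := h
  obtain ⟨p, q, rfl, rfl⟩ := hrw.exists_parts
  obtain ⟨r, hr, hin, hout⟩ := exists_of_mem_defSub_rules hr'
  refine ⟨r, hr, ?_⟩
  simp only [List.map_append, List.map_cons, List.map_nil]
  rw [hout, map_backSym_map_toDefSub, backSym_nonterminal, hin]
  simpa using ContextFreeRule.rewrites_of_exists_parts r (p.map (backSym g X)) (q.map (backSym g X))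

lemma ContextFreeGrammar.Derives.map_backSym
    {γ γ' : List (Symbol (T ⊕ g.NT) (defSub g X).NT)}
    (h : (defSub g X).Derives γ γ') :
    g.Derives (γ.map (backSym g X)) (γ'.map (backSym g X)) := by
  induction h with
  | refl => rfl
  | tail _ hstep ih => exact ih.tail hstep.map_backSym

lemma derives_of_defSub_derives {γ : List (Symbol (T ⊕ g.NT) (defSub g X).NT)}
    {u : List (T ⊕ g.NT)} {w : List T} (hd : (defSub g X).Derives γ (u.map .terminal))
    (hw : w ∈ substStr (pseudoLang g) u) :
    g.Derives (γ.map (backSym g X)) (w.map .terminal) := by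
  have hu :
      (u.map Symbol.terminal).map (backSym g X) = u.map (Sum.elim .terminal .nonterminal) := by
    simp only [List.map_map]
    congr 1
    funext c
    rcases c with t | Y <;> rfl
  refine hd.map_backSym.trans (hu ▸ derives_of_mem_substStr ?_)
  rwa [substStr_map, show symbolLang g ∘ Sum.elim .terminal .nonterminal = pseudoLang g by
    funext c; rcases c with t | Y <;> rfl]

lemma toDefSub_nonterminal_of_sameComp {Y : g.NT} (h : SameComp g X Y) :
    toDefSub g X (.nonterminal Y) = .nonterminal ⟨Y, h⟩ :=
  dif_pos h

lemma toDefSub_nonterminal_of_not_sameComp {Y : g.NT} (h : ¬ SameComp g X Y) :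
    toDefSub g X (.nonterminal Y) = .terminal (.inr Y) :=
  dif_neg h

lemma defSub_produces_map_toDefSub {r : ContextFreeRule T g.NT} (hr : r ∈ g.rules)
    (hX : SameComp g X r.input) (p q : List (Symbol T g.NT)) :
    (defSub g X).Produces ((p ++ [Symbol.nonterminal r.input] ++ q).map (toDefSub g X))
      ((p ++ r.output ++ q).map (toDefSub g X)) := by
  refine ⟨_, mem_defSub_rules hr hX, ?_⟩
  simp only [List.map_append, List.map_cons, List.map_nil, toDefSub_nonterminal_of_sameComp hX]
  exact ContextFreeRule.rewrites_of_exists_parts _ _ _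

lemma exists_defSub_derives {α : List (Symbol T g.NT)} {w : List T}
    (h : g.Derives α (w.map .terminal)) :
    ∃ u : List (T ⊕ g.NT), (defSub g X).Derives (α.map (toDefSub g X)) (u.map .terminal) ∧
      w ∈ substStr (pseudoLang g) u := by
  induction h using Relation.ReflTransGen.head_induction_on with
  | refl =>
      refine ⟨w.map .inl, ?_, ?_⟩
      · rw [List.map_map, List.map_map]
        rfl
      · rw [substStr_map]
        exact mem_substStr_singleton_self w
  | head hstep _ ih =>
      obtain ⟨u', hd', hw'⟩ := ih
      obtain ⟨r, hr, hrw⟩ := hstep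
      obtain ⟨p, q, rfl, rfl⟩ := hrw.exists_parts
      by_cases hX : SameComp g X r.input
      · exact ⟨u', .head (defSub_produces_map_toDefSub hr hX p q) hd', hw'⟩
      rw [List.map_append, List.map_append] at hd'
      obtain ⟨u₁₂, u₃, rfl, hd₁₂, hd₃⟩ := hd'.append_split_terminal
      obtain ⟨u₁, u₂, rfl, hd₁, hd₂⟩ := hd₁₂.append_split_terminal
      rw [substStr_append, substStr_append] at hw'
      obtain ⟨w₁₂, hw₁₂, w₃, hw₃, rfl⟩ := Language.mem_mul.1 hw'
      obtain ⟨w₁, hw₁, w₂, hw₂, rfl⟩ := Language.mem_mul.1 hw₁₂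
      have hY : w₂ ∈ langFrom g r.input :=
        .head ⟨r, hr, .input_output⟩ <| by
          simpa only [map_backSym_map_toDefSub] using derives_of_defSub_derives hd₂ hw₂
      refine ⟨u₁ ++ .inr r.input :: u₃, ?_, ?_⟩
      · simp only [List.map_append, List.map_cons, List.map_nil,
          toDefSub_nonterminal_of_not_sameComp hX]
        have hmid : (defSub g X).Derives [.terminal (.inr r.input)] [.terminal (.inr r.input)] :=
          .refl
        simpa using (hd₁.append hmid).append hd₃
      · rw [substStr_append, substStr_cons, ← mul_assoc]
        exact Language.mem_mul.2
          ⟨w₁ ++ w₂, Language.mem_mul.2 ⟨w₁, hw₁, w₂, hY, rfl⟩, w₃, hw₃, rfl⟩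

theorem langFrom_le_substLang_defSub (X : g.NT) :
    langFrom g X ≤ substLang (pseudoLang g) (defSub g X).language := fun w hw => by
  obtain ⟨u, hd, hwu⟩ := exists_defSub_derives (X := X) hw
  have hX : [Symbol.nonterminal X].map (toDefSub g X) = [.nonterminal (defSub g X).initial] := by
    rw [List.map_singleton, toDefSub_nonterminal_of_sameComp ⟨.refl, .refl⟩]
    rfl
  rw [hX] at hd
  exact Set.mem_biUnion hd hwu

end DefiningSubgrammar

end LRApprox

open LRApprox

/-- Given, for each nonterminal `X`, a finite automaton
`aut(X)` over the alphabet of `def(X)` (terminals plus pseudoterminals) with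
`L(def(X)) ⊆ L(aut(X))`, the combined automaton for `G` — obtained from
`aut(S)` by recursively replacing every transition labeled by a pseudoterminal
`X'` with ε-transitions into and out of a fresh copy of `aut(X')` — accepts a
superset of `L(G)`; moreover the replacement process terminates (the
subautomata dependency graph being acyclic), yielding languages `Exp X`
satisfying the corresponding substitution equations, with the combined
automaton a finite automaton for `Exp S`. -/
theorem combined_automaton_sound {T : Type*} (g : LRApprox.ContextFreeGrammar T)
    (Q : g.NT → Type) (hQ : ∀ X : g.NT, Finite (Q X))
    (M : ∀ X : g.NT, NFA (T ⊕ g.NT) (Q X))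
    (hsound : ∀ X : g.NT, (defSub g X).language ≤ (M X).accepts)
    (halpha : ∀ (X : g.NT) (u : List (T ⊕ g.NT)), u ∈ (M X).accepts →
      ∀ Y : g.NT, Sum.inr Y ∈ u → IsPseudo g X Y) :
    ∃ Exp : g.NT → Language T,
      (∀ X : g.NT, Exp X =
        substLang (Sum.elim (fun a : T => ({[a]} : Language T)) Exp)
          ((M X).accepts)) ∧
      g.language ≤ Exp g.initial ∧
      ∃ (σ : Type) (_ : Fintype σ) (MC : NFA T σ), MC.accepts = Exp g.initial := by
  have hwf := isPseudo_wellFounded g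
  obtain ⟨Exp, hExp⟩ := exists_eq_substLang_of_wellFounded hwf (fun X => (M X).accepts) halpha
  have hlang : ∀ X, langFrom g X ≤ Exp X := fun X => by
    induction X using hwf.induction with | _ X ih => ?_
    intro w hw
    obtain ⟨u, hu, hwu⟩ := Set.mem_iUnion₂.1 (langFrom_le_substLang_defSub X hw)
    rw [hExp X]
    refine Set.mem_biUnion (hsound X hu) (substStr_mono (fun c hc => ?_) hwu)
    rcases c with a | Y
    exacts [le_rfl, ih Y (halpha X u (hsound X hu) Y hc)]
  have hreg : ∀ X, (Exp X).IsRegular := fun X => by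
    induction X using hwf.induction with | _ X ih => ?_
    have := hQ X
    rw [hExp X]
    exact isRegular_substLang (M X) (finite_setOf_isPseudo g X) (halpha X) ih
  obtain ⟨σ, hσ, D, hD⟩ := hreg g.initial
  exact ⟨Exp, hExp, hlang g.initial, σ, hσ, D.toNFA, by rw [DFA.toNFA_correct, hD]⟩
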